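/- Let T be the subgraph of the de Bruijn graph of span n consisting, for each vertex v ≠ m (where m is the lexicographically maximum vertex), of the arc e(v) with tail v of maximum label. Let W = v_0 e_0 v_1 e_1 ... e_{k-1} v_k be a walk in T with k ≥ n+2. Then l(e_0) ≤ l(e_{n+1}). -/

import Mathlib

/-!
Along a walk the vertices behave like a shift register: each step drops the first letter and
appends the label of the arc taken. After `n` steps the initial word has been shifted out, so
`v n` is the word of the first `n` labels and starts with `γ (v 0)`. The allowed word
`v n ++ [γ (v n)] = γ (v 0) :: v (n + 1)` rotates to `v (n + 1) ++ [γ (v 0)]`, an arc leaving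
`v (n + 1)` with label `γ (v 0)`, which by maximality is at most `γ (v (n + 1))`.
-/

section ShiftRegister

variable {A : Type*} {w : ℕ → List A} {c : ℕ → A}

theorem shift_eq_drop_append_map_range {j : ℕ}
    (hw : ∀ i < j, w (i + 1) = (w i).tail ++ [c i]) (hj : j ≤ (w 0).length) :
    w j = (w 0).drop j ++ (List.range j).map c := by
  induction j with
  | zero => simp
  | succ j ih =>
    have hdrop : (w 0).drop j ≠ [] := by simpa using (by omega : j < (w 0).length)
    rw [hw j (by omega), ih (fun i hi => hw i (by omega)) (by omega),
      List.tail_append_of_ne_nil hdrop, List.tail_drop, List.range_succ, List.map_append,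
      List.append_assoc]
    rfl

theorem shift_length_eq_map_range (hw : ∀ i < (w 0).length, w (i + 1) = (w i).tail ++ [c i]) :
    w (w 0).length = (List.range (w 0).length).map c := by
  simpa using shift_eq_drop_append_map_range hw le_rfl

end ShiftRegister

theorem label_le_label_add_succ {A : Type*} [LinearOrder A] (n k : ℕ)
    (L : Set (List A)) (γ : List A → A) (v : ℕ → List A)
    -- vertices are words of length n
    (hlen : ∀ i, (v i).length = n)
    -- the language of allowed (n+1)-words is closed under rotation
    (hrot : ∀ (a : A) (w' : List A), (a :: w') ∈ L → (w' ++ [a]) ∈ L)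
    -- γ (v i) is the maximal label of an arc leaving v i
    (hmax : ∀ i ≤ k, ∀ b : A, (v i) ++ [b] ∈ L → b ≤ γ (v i))
    -- the walk follows the arcs of T: from v i we follow the arc labeled γ (v i)
    (hstep : ∀ i < k, (v i) ++ [γ (v i)] ∈ L ∧ v (i + 1) = (v i).tail ++ [γ (v i)])
    (hk : n + 2 ≤ k) :
    γ (v 0) ≤ γ (v (n + 1)) := by
  have hn : n ≠ 0 := by
    have h := hlen 1
    rw [(hstep 0 (by omega)).2] at h
    simp at h
    omega
  have hvn : v n = (List.range n).map (fun i => γ (v i)) := by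
    simpa only [hlen 0] using
      shift_length_eq_map_range (fun i hi => (hstep i (by rw [hlen 0] at hi; omega)).2)
  have hcons : v n ++ [γ (v n)] = γ (v 0) :: v (n + 1) := by
    obtain ⟨m, rfl⟩ := Nat.exists_eq_add_one_of_ne_zero hn
    rw [(hstep (m + 1) (by omega)).2, hvn, List.range_succ_eq_map]
    rfl
  have hallowed : v (n + 1) ++ [γ (v 0)] ∈ L :=
    hrot _ _ (hcons ▸ (hstep n (by omega)).1)
  exact hmax (n + 1) (by omega) _ hallowed
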